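/- arXiv:2512.19096 — 2 statements merged into one kernel-verified Lean document; each statement's English description precedes it below -/
import Mathlib

section
/- Let 𝒰 be a real vector space, (V_acc, V_des) a background on 𝒰, (M_acc, M_des) an AD-model respecting this background, and φ : 𝒰 → 𝒰 an event (linear, idempotent, with φ(V_acc) ⊆ V_acc) that is regular (V_des ∩ I_φ = ∅). Then posi((M_acc⦀φ) ∪ V_acc) ∩ (−((M_des⦀φ) ∪ V_des)) = ∅ if and only if 0 ∉ (M_acc⦀φ) + V_des. -/
open Pointwise

/-- `posi S`: all strictly positive finite linear combinations of elements of `S`. -/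
def posi {V : Type*} [AddCommGroup V] [Module ℝ V] (S : Set V) : Set V :=
  {u | ∃ n : ℕ, 0 < n ∧ ∃ (lam : Fin n → ℝ) (w : Fin n → V),
    (∀ k, 0 < lam k) ∧ (∀ k, w k ∈ S) ∧ u = ∑ k, lam k • w k}

/-- `condon K φ = K⦀φ`: the options whose called-off version under `φ` lies in `K`. -/
def condon {V : Type*} [AddCommGroup V] [Module ℝ V] (K : Set V) (φ : V →ₗ[ℝ] V) : Set V :=
  {u | φ u ∈ K}

lemma mem_posi_self {V : Type*} [AddCommGroup V] [Module ℝ V] {S : Set V} {u : V}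
    (hu : u ∈ S) : u ∈ posi S := by
  refine ⟨1, one_pos, fun _ => 1, fun _ => u, fun _ => one_pos, fun _ => hu, ?_⟩
  simp

theorem stmt2 {U : Type*} [AddCommGroup U] [Module ℝ U]
    (Vacc Vdes : Set U)
    (hV0acc : (0 : U) ∈ Vacc) (hV0des : (0 : U) ∉ Vdes) (hVsub : Vdes ⊆ Vacc)
    (hVaccCone : posi Vacc = Vacc) (hVdesCone : posi Vdes = Vdes)
    (hVadd : Vacc + Vdes ⊆ Vdes)
    (Macc Mdes : Set U)
    (hMacc : Vacc ⊆ Macc) (hMdes : Vdes ⊆ Mdes) (hMsub : Mdes ⊆ Macc)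
    (hM0 : (0 : U) ∉ Mdes) (hMaccCone : posi Macc = Macc) (hMdesCone : posi Mdes = Mdes)
    (hMadd : Macc + Mdes ⊆ Mdes)
    (φ : U →ₗ[ℝ] U) (hidem : φ ∘ₗ φ = φ) (hmono : ∀ u ∈ Vacc, φ u ∈ Vacc)
    (hreg : Vdes ∩ {u : U | φ u = 0} = ∅) :
    posi (condon Macc φ ∪ Vacc) ∩ (-(condon Mdes φ ∪ Vdes)) = ∅ ↔
      (0 : U) ∉ condon Macc φ + Vdes := by
  constructor
  · intro h hcon
    rw [Set.mem_add] at hcon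
    obtain ⟨a, ha, d, hd, had⟩ := hcon
    have h1 : a ∈ posi (condon Macc φ ∪ Vacc) := mem_posi_self (Or.inl ha)
    have h2 : a ∈ -(condon Mdes φ ∪ Vdes) := by
      rw [Set.mem_neg]
      have : -a = d := by rw [neg_eq_iff_add_eq_zero]; exact had
      exact this ▸ Or.inr hd
    exact Set.eq_empty_iff_forall_notMem.mp h a ⟨h1, h2⟩
  · intro h
    rw [Set.eq_empty_iff_forall_notMem]
    rintro u ⟨hu, hneg⟩
    -- φ u ∈ Macc
    have hφu : φ u ∈ Macc := by
      obtain ⟨n, hn, lam, w, hlam, hw, hsum⟩ := hu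
      have : φ u = ∑ k, lam k • φ (w k) := by
        rw [hsum]; simp [map_sum, map_smul]
      rw [← hMaccCone]
      refine ⟨n, hn, lam, fun k => φ (w k), hlam, ?_, this⟩
      intro k
      rcases hw k with hk | hk
      · exact hk
      · exact hMacc (hmono _ hk)
    rw [Set.mem_neg] at hneg
    rcases hneg with hd | hd
    · have : (0 : U) ∈ Mdes := by
        have := hMadd (Set.add_mem_add hφu hd)
        simpa using this
      exact hM0 this
    · exact h (by
        rw [Set.mem_add]
        exact ⟨u, hφu, -u, hd, by simp⟩)
end

section
/- In the space 𝒰 = (Fin 4 → ℝ) of gambles on a four-element possibility space, let 𝒢≥0 := {f : ∀i, f(i) ≥ 0}, v := (−1, 1, −1, 1), M_acc := posi(𝒢≥0 ∪ {v}), E := {0, 1}, I_E := {f : f(0) = 0 and f(1) = 0}, and M_acc⦀E := {f : 1_E·f ∈ M_acc}, where 1_E·f is the gamble equal to f on E and 0 elsewhere. Then: (i) M_acc = {g + α·v : g ∈ 𝒢≥0, α ≥ 0}; (ii) M_acc⦀E = {f : f(0) ≥ 0 and f(1) ≥ 0}; (iii) v ∈ M_acc + I_E but v ∉ M_acc⦀E,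 so that M_acc + I_E ⊄ M_acc⦀E (the AGM revision axiom BR4, which asks that expansion be included in revision under consistency, fails for conditioning). -/
open Pointwise

/-- The nonnegative gambles on a four-element possibility space. -/
def Gge0 : Set (Fin 4 → ℝ) := {f | ∀ i, 0 ≤ f i}

/-- The gamble `(−1, 1, −1, 1)`. -/
def vG : Fin 4 → ℝ := ![-1, 1, -1, 1]

/-- The set of acceptable gambles of the counterexample. -/
def MaccEx : Set (Fin 4 → ℝ) := posi (Gge0 ∪ {vG})

/-- The conditioning event `E = {0, 1}`. -/
def E7 : Set (Fin 4) := {0, 1}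

/-- The kernel `I_E` of the calling-off operation associated with `E`. -/
def IE7 : Set (Fin 4 → ℝ) := {f | f 0 = 0 ∧ f 1 = 0}

/-- `M_acc⦀E`: gambles whose called-off version `1_E·f` is acceptable. -/
def MaccCondE : Set (Fin 4 → ℝ) := {f | E7.indicator f ∈ MaccEx}

/-! `M_acc` is the convex cone generated by the nonnegative orthant and `v`, which is exactly
`𝒢≥0 + ℝ≥0 • v`. A called-off gamble `1_E·f` vanishes at `3`, while every `h + α • v` has
third coordinate `h 3 + α ≥ α`; so `1_E·f` can only be acceptable with `α = 0`, i.e. when it is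
nonnegative. Hence `v`, which lies in `M_acc ⊆ M_acc + I_E`, is not in `M_acc⦀E` since `v 0 < 0`. -/

section Posi

variable {V : Type*} [AddCommGroup V] [Module ℝ V] {S T : Set V}

lemma subset_posi : S ⊆ posi S := fun u hu =>
  ⟨1, one_pos, fun _ => 1, fun _ => u, fun _ => one_pos, fun _ => hu, by simp⟩

lemma smul_mem_posi {c : ℝ} (hc : 0 < c) {u : V} (hu : u ∈ posi S) : c • u ∈ posi S := by
  obtain ⟨n, hn, lam, w, hlam, hw, rfl⟩ := hu
  refine ⟨n, hn, fun k => c * lam k, w, fun k => mul_pos hc (hlam k), hw, ?_⟩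
  simp only [Finset.smul_sum, smul_smul]

lemma add_mem_posi {u u' : V} (hu : u ∈ posi S) (hu' : u' ∈ posi S) : u + u' ∈ posi S := by
  obtain ⟨n, hn, lam, w, hlam, hw, rfl⟩ := hu
  obtain ⟨m, -, lam', w', hlam', hw', rfl⟩ := hu'
  refine ⟨n + m, by omega, Fin.append lam lam', Fin.append w w',
    Fin.addCases (by simpa using hlam) (by simpa using hlam'),
    Fin.addCases (by simpa using hw) (by simpa using hw'), ?_⟩
  simp [Fin.sum_univ_add]

lemma posi_subset (hST : S ⊆ T) (hadd : ∀ a ∈ T, ∀ b ∈ T, a + b ∈ T)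
    (hsmul : ∀ c : ℝ, 0 < c → ∀ a ∈ T, c • a ∈ T) : posi S ⊆ T := by
  rintro u ⟨n, hn, lam, w, hlam, hw, rfl⟩
  exact Finset.sum_induction_nonempty _ (· ∈ T) (fun a b ha hb => hadd a ha b hb)
    (Finset.univ_nonempty_iff.2 ⟨⟨0, hn⟩⟩) fun k _ => hsmul _ (hlam k) _ (hST (hw k))

end Posi

lemma maccEx_eq : MaccEx = {g | ∃ h ∈ Gge0, ∃ α : ℝ, 0 ≤ α ∧ g = h + α • vG} := by
  apply Set.Subset.antisymm
  · apply posi_subset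
    · rintro u (hu | rfl)
      · exact ⟨u, hu, 0, le_rfl, by simp⟩
      · exact ⟨0, fun _ => le_rfl, 1, zero_le_one, by simp⟩
    · rintro _ ⟨h, hh, α, hα, rfl⟩ _ ⟨h', hh', α', hα', rfl⟩
      exact ⟨h + h', fun i => add_nonneg (hh i) (hh' i), α + α', add_nonneg hα hα',
        by rw [add_smul]; abel⟩
    · rintro c hc _ ⟨h, hh, α, hα, rfl⟩
      exact ⟨c • h, fun i => mul_nonneg hc.le (hh i), c * α, mul_nonneg hc.le hα,
        by rw [smul_add, smul_smul]⟩
  · rintro _ ⟨h, hh, α, hα, rfl⟩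
    have hh_mem : h ∈ MaccEx := subset_posi (Or.inl hh)
    rcases hα.eq_or_lt with rfl | hα_pos
    · simpa using hh_mem
    · exact add_mem_posi hh_mem (smul_mem_posi hα_pos (subset_posi (Or.inr rfl)))

lemma mem_gge0_of_mem_maccEx_of_apply_three_eq_zero {g : Fin 4 → ℝ} (hg : g ∈ MaccEx)
    (hg3 : g 3 = 0) : g ∈ Gge0 := by
  rw [maccEx_eq] at hg
  obtain ⟨h, hh, α, hα, rfl⟩ := hg
  have hv3 : vG 3 = 1 := rfl
  have hα0 : α = 0 := by
    simp only [Pi.add_apply, Pi.smul_apply, smul_eq_mul, hv3] at hg3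
    linarith [hh 3]
  simpa [hα0] using hh

lemma indicator_E7_mem_gge0_iff (f : Fin 4 → ℝ) :
    E7.indicator f ∈ Gge0 ↔ 0 ≤ f 0 ∧ 0 ≤ f 1 := by
  constructor
  · intro hf
    exact ⟨by simpa [E7] using hf 0, by simpa [E7] using hf 1⟩
  · rintro ⟨hf0, hf1⟩
    exact Set.indicator_nonneg (by rintro a (rfl | rfl) <;> assumption)

lemma maccCondE_eq : MaccCondE = {f | 0 ≤ f 0 ∧ 0 ≤ f 1} := by
  ext f
  rw [Set.mem_ofPred_eq, ← indicator_E7_mem_gge0_iff]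
  refine ⟨fun hf => mem_gge0_of_mem_maccEx_of_apply_three_eq_zero hf ?_,
    fun hf => subset_posi (Or.inl hf)⟩
  simp [E7]

theorem stmt7 :
    MaccEx = {g | ∃ h ∈ Gge0, ∃ α : ℝ, 0 ≤ α ∧ g = h + α • vG} ∧
    MaccCondE = {f | 0 ≤ f 0 ∧ 0 ≤ f 1} ∧
    vG ∈ MaccEx + IE7 ∧ vG ∉ MaccCondE ∧ ¬ MaccEx + IE7 ⊆ MaccCondE := by
  have hv_mem : vG ∈ MaccEx + IE7 := by
    rw [← add_zero vG]
    exact Set.add_mem_add (subset_posi (Or.inr rfl)) ⟨rfl, rfl⟩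
  have hv_not_mem : vG ∉ MaccCondE := by
    simp [maccCondE_eq, vG]
  exact ⟨maccEx_eq, maccCondE_eq, hv_mem, hv_not_mem, fun hsub => hv_not_mem (hsub hv_mem)⟩
end
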